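/- arXiv:2502.04939 — 2 statements merged into one kernel-verified Lean document; each statement's English description precedes it below -/
import Mathlib

section
/- Let β > 0 and m ≥ 1. Suppose X(t) = X_0 + h(t) with h: ℝ → ℂ^n having all entries equal to a common function h(t) of t and h(0) = 0, and suppose X satisfies X'' + βX' = (-1)^{m+1}M^m X for all t. Then X_0 has all entries equal, i.e., X_0 is a constant vector and X is a trivial (point) solution. -/
/-!
Along a translating solution both derivatives of `X` are constant vectors, and `M` annihilates
constant vectors, so the flow equation says that `M ^ m X₀` is a constant vector. Its entries
sum to zero because every column of `M` does, hence `M ^ m X₀ = 0`. As `M` is Hermitian, its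
powers have the same kernel as `M`, and `M x = 0` makes the forward differences of `x`
a constant sequence with zero sum, so `x` is constant.
-/

/-- The discrete Laplacian circulant matrix `circ(-2,1,0,…,0,1)` over `ℂ`. -/
noncomputable def lapM (n : ℕ) [NeZero n] : Matrix (Fin n) (Fin n) ℂ :=
  Matrix.of fun i j =>
    (if j = i + 1 then 1 else 0) + (if j = i - 1 then 1 else 0) + (if j = i then -2 else 0)

open Matrix
open scoped ComplexOrder

section Hermitian

variable {ι R : Type*} [Fintype ι] [CommRing R] [PartialOrder R] [StarRing R]
  [StarOrderedRing R] [NoZeroDivisors R] {A : Matrix ι ι R} {x : ι → R}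

theorem Matrix.IsHermitian.mulVec_eq_zero_of_mul_self_mulVec_eq_zero (hA : A.IsHermitian)
    (hx : (A * A) *ᵥ x = 0) : A *ᵥ x = 0 := by
  rw [← dotProduct_star_self_eq_zero, star_mulVec, ← dotProduct_mulVec, hA.eq, mulVec_mulVec,
    hx, dotProduct_zero]

theorem Matrix.IsHermitian.mulVec_eq_zero_of_pow_mulVec_eq_zero [DecidableEq ι]
    (hA : A.IsHermitian) {m : ℕ} (hx : (A ^ m) *ᵥ x = 0) : A *ᵥ x = 0 := by
  have of_two_pow : ∀ j : ℕ, (A ^ 2 ^ j) *ᵥ x = 0 → A *ᵥ x = 0 := by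
    intro j
    induction j with
    | zero => rw [pow_zero, pow_one]; exact id
    | succ j ih =>
      intro hj
      rw [pow_succ, pow_mul, sq] at hj
      exact ih ((hA.pow _).mulVec_eq_zero_of_mul_self_mulVec_eq_zero hj)
  refine of_two_pow m ?_
  obtain ⟨k, hk⟩ := Nat.exists_eq_add_of_le (Nat.lt_two_pow_self (n := m)).le
  rw [hk, add_comm, pow_add, ← mulVec_mulVec, hx, mulVec_zero]

end Hermitian

theorem eq_zero_of_forall_eq_of_sum_eq_zero {ι K : Type*} [Fintype ι] [Field K] [CharZero K]
    {y : ι → K} (hy : ∀ i j, y i = y j) (hsum : ∑ i, y i = 0) : y = 0 := by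
  funext i
  have : Nonempty ι := ⟨i⟩
  have hcard : (Fintype.card ι : K) ≠ 0 := Nat.cast_ne_zero.2 Fintype.card_ne_zero
  rw [Fintype.sum_congr _ _ (hy · i), Finset.sum_const, Finset.card_univ, nsmul_eq_mul] at hsum
  exact (mul_eq_zero.1 hsum).resolve_left hcard

section Shift

variable {G M : Type*} [AddGroup G] [Fintype G] [AddCommMonoid M]

theorem sum_comp_add_const (f : G → M) (a : G) : ∑ i, f (i + a) = ∑ i, f i :=
  Fintype.sum_equiv (Equiv.addRight a) _ _ fun _ => rfl

theorem sum_comp_sub_const (f : G → M) (a : G) : ∑ i, f (i - a) = ∑ i, f i :=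
  Fintype.sum_equiv (Equiv.subRight a) _ _ fun _ => rfl

end Shift

theorem Fin.forall_eq_of_forall_add_one_eq {n : ℕ} [NeZero n] {α : Type*} {y : Fin n → α}
    (hy : ∀ i, y (i + 1) = y i) : ∀ i j, y i = y j := by
  obtain ⟨k, rfl⟩ := Nat.exists_eq_succ_of_ne_zero (NeZero.ne n)
  suffices h : ∀ i, y i = y 0 from fun i j => (h i).trans (h j).symm
  intro i
  induction i using Fin.induction with
  | zero => rfl
  | succ i ih => rw [← Fin.coeSucc_eq_succ, hy, ih]

theorem deriv_pi_const {ι 𝕜 F : Type*} [Fintype ι] [Nonempty ι] [NontriviallyNormedField 𝕜]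
    [NormedAddCommGroup F] [NormedSpace 𝕜 F] (g : 𝕜 → F) (t : 𝕜) :
    deriv (fun s (_ : ι) => g s) t = fun _ => deriv g t := by
  by_cases hg : DifferentiableAt 𝕜 g t
  · exact (hasDerivAt_pi.2 fun _ => hg.hasDerivAt).deriv
  · have hg' : ¬DifferentiableAt 𝕜 (fun s (_ : ι) => g s) t := fun h' =>
      hg (differentiableAt_pi.1 h' (Classical.arbitrary ι))
    rw [deriv_zero_of_not_differentiableAt hg, deriv_zero_of_not_differentiableAt hg']
    rfl

section lapM

variable {n : ℕ} [NeZero n]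

theorem lapM_mulVec_apply (x : Fin n → ℂ) (i : Fin n) :
    (lapM n *ᵥ x) i = x (i + 1) + x (i - 1) - 2 * x i := by
  simp only [lapM, mulVec, dotProduct, of_apply, add_mul, ite_mul, one_mul, zero_mul, neg_mul,
    Finset.sum_add_distrib, Finset.sum_ite_eq', Finset.mem_univ, if_true]
  ring

theorem sum_lapM_mulVec (x : Fin n → ℂ) : ∑ i, (lapM n *ᵥ x) i = 0 := by
  simp only [lapM_mulVec_apply, Finset.sum_sub_distrib, Finset.sum_add_distrib, ← Finset.mul_sum,
    sum_comp_add_const x, sum_comp_sub_const x]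
  ring

theorem lapM_mulVec_const (c : ℂ) : lapM n *ᵥ (fun _ => c) = 0 := by
  funext i
  rw [lapM_mulVec_apply, Pi.zero_apply]
  ring

theorem isHermitian_lapM : (lapM n).IsHermitian := by
  have h_shift (a b : Fin n) : a = b + 1 ↔ b = a - 1 := by rw [eq_sub_iff_add_eq, eq_comm]
  ext i j
  simp only [conjTranspose_apply, lapM, of_apply, star_add, apply_ite (star : ℂ → ℂ), star_one,
    star_zero, star_neg, star_ofNat, h_shift i j, h_shift j i, eq_comm (a := j) (b := i)]
  ring

theorem forall_eq_of_lapM_mulVec_eq_zero {x : Fin n → ℂ} (hx : lapM n *ᵥ x = 0) :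
    ∀ i j, x i = x j := by
  set d : Fin n → ℂ := fun i => x (i + 1) - x i
  have hd_step (i : Fin n) : d (i + 1) = d i := by
    have h := congrFun hx (i + 1)
    rw [lapM_mulVec_apply, add_sub_cancel_right, Pi.zero_apply] at h
    linear_combination h
  have hd_sum : ∑ i, d i = 0 := by
    simp only [d, Finset.sum_sub_distrib, sum_comp_add_const x, sub_self]
  have hd : d = 0 :=
    eq_zero_of_forall_eq_of_sum_eq_zero (Fin.forall_eq_of_forall_add_one_eq hd_step) hd_sum
  exact Fin.forall_eq_of_forall_add_one_eq fun i => sub_eq_zero.1 (congrFun hd i)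

variable {m : ℕ} (hm : 1 ≤ m)
include hm

theorem sum_lapM_pow_mulVec (x : Fin n → ℂ) : ∑ i, (lapM n ^ m *ᵥ x) i = 0 := by
  obtain ⟨k, rfl⟩ := Nat.exists_eq_add_of_le' hm
  rw [pow_succ', ← mulVec_mulVec]
  exact sum_lapM_mulVec _

theorem lapM_pow_mulVec_const (c : ℂ) : lapM n ^ m *ᵥ (fun _ => c) = 0 := by
  obtain ⟨k, rfl⟩ := Nat.exists_eq_add_of_le' hm
  rw [pow_succ, ← mulVec_mulVec, lapM_mulVec_const, mulVec_zero]

end lapM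

theorem no_translating_solutions_general (n m : ℕ) [NeZero n] (hm : 1 ≤ m)
    (β : ℝ) (X₀ : Fin n → ℂ) (h : ℝ → ℂ)
    (X : ℝ → Fin n → ℂ) (hX : ∀ t : ℝ, X t = X₀ + fun _ => h t)
    (hflow : ∀ t : ℝ, deriv (deriv X) t + β • deriv X t
      = ((-1 : ℂ) ^ (m + 1) • (lapM n) ^ m).mulVec (X t)) :
    ∀ i j : Fin n, X₀ i = X₀ j := by
  have hdX : deriv X = fun t _ => deriv h t := by
    funext t
    rw [funext hX, deriv_const_add, deriv_pi_const]
  have hddX : deriv (deriv X) = fun t _ => deriv (deriv h) t := by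
    funext t
    rw [hdX, deriv_pi_const]
  set y := lapM n ^ m *ᵥ X₀
  have hy_const (i j : Fin n) : y i = y j := by
    have h0 := hflow 0
    rw [hddX, hdX, hX 0, smul_mulVec, mulVec_add, lapM_pow_mulVec_const hm, add_zero] at h0
    have h_ij := (congrFun h0 i).symm.trans (congrFun h0 j)
    rw [Pi.smul_apply, Pi.smul_apply] at h_ij
    exact smul_right_injective ℂ (pow_ne_zero _ (neg_ne_zero.2 one_ne_zero)) h_ij
  have hy : y = 0 := eq_zero_of_forall_eq_of_sum_eq_zero hy_const (sum_lapM_pow_mulVec hm X₀)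
  exact forall_eq_of_lapM_mulVec_eq_zero (isHermitian_lapM.mulVec_eq_zero_of_pow_mulVec_eq_zero hy)

/-- No nontrivial self-similar translating solutions: if `X(t) = X₀ + (h(t),…,h(t))`
solves `X'' + βX' = (-1)^{m+1} M^m X` with `h(0) = 0` and `β > 0`, then `X₀` is a
constant vector (all entries equal). -/
theorem no_translating_solutions (n m : ℕ) [NeZero n] (hm : 1 ≤ m)
    (β : ℝ) (hβ : 0 < β) (X₀ : Fin n → ℂ) (h : ℝ → ℂ)
    (hh : Differentiable ℝ h) (hh' : Differentiable ℝ (deriv h)) (hh0 : h 0 = 0)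
    (X : ℝ → Fin n → ℂ) (hX : ∀ t : ℝ, X t = X₀ + fun _ => h t)
    (hflow : ∀ t : ℝ, deriv (deriv X) t + β • deriv X t
      = ((-1 : ℂ) ^ (m + 1) • (lapM n) ^ m).mulVec (X t)) :
    ∀ i j : Fin n, X₀ i = X₀ j :=
  no_translating_solutions_general n m hm β X₀ h X hX hflow
end

section
/- Let n ≥ 3, m ≥ 1, β > 0, and let X_0 = Σ_{k=0}^{n-1} α_k^0 P_k ∈ ℂ^n. Define X(t) = Σ_{k=0}^{n-1} α_k(t) P_k where α_0(t) = α_0^0 and, for k ≥ 1 with |λ_{m,k}| > β²/4, α_k(t) = e^{-βt/2} α_k^0 cos(γ_{m,k} t) with γ_{m,k} = √(-λ_{m,k} - β²/4) (and analogous formulas in the other eigenvalue regimes with zero free constants). Then X solves X'' + βX' = (-1)^{m+1}M^m X with X(0) = X_0, and X(t) → α_0^0 P_0 as t → ∞, i.e., the polygon converges to a single point. -/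
/-- The basis polygon `P_k = (1, ω^k, …, ω^{(n-1)k})` with `ω = e^{2πi/n}`. -/
noncomputable def Pvec (n k : ℕ) : Fin n → ℂ :=
  fun j => Complex.exp (2 * (Real.pi : ℂ) * Complex.I * (k : ℂ) * ((j : ℕ) : ℂ) / (n : ℂ))


/-! Each `P_k` is an eigenvector of the circulant `M`, with eigenvalue
`ω^k + ω^{-k} - 2 = -4 sin²(πk/n)`, hence of `(-1)^{m+1} M^m` with eigenvalue `λ_{m,k}`; so the
equation decouples into the scalar equations `α'' + β α' = λ_{m,k} α`. In every regime `α_k` is a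
combination of exponentials `e^{rt}` with `r² + β r = λ_{m,k}`. For `0 < k < n` we have
`λ_{m,k} < 0`, and every root of `r² + β r = λ` with `β > 0 > λ` has negative real part, so all
modes except `k = 0` decay. -/

open Complex Filter Topology Matrix
open scoped Real

lemma Pvec_apply_eq_pow (n k : ℕ) (j : Fin n) :
    Pvec n k j = exp (2 * π * I * k / n) ^ (j : ℕ) := by
  rw [Pvec, ← exp_nat_mul]
  ring_nf

lemma exp_two_pi_I_mul_div_pow_self (n k : ℕ) [NeZero n] :
    exp (2 * π * I * k / n) ^ n = 1 := by
  rw [← exp_nat_mul, mul_div_cancel₀ _ (NeZero.ne (n : ℂ)),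
    show 2 * π * I * k = k * (2 * π * I) by ring]
  exact exp_nat_mul_two_pi_mul_I k

lemma Pvec_apply_add_one (n k : ℕ) [NeZero n] (i : Fin n) :
    Pvec n k (i + 1) = exp (2 * π * I * k / n) * Pvec n k i := by
  have hmod := exp_two_pi_I_mul_div_pow_self n k
  rw [Pvec_apply_eq_pow, Pvec_apply_eq_pow, Fin.val_add, Fin.val_one', Nat.add_mod_mod,
    ← pow_eq_pow_mod _ hmod, pow_succ']

lemma Pvec_apply_sub_one (n k : ℕ) [NeZero n] (i : Fin n) :
    Pvec n k (i - 1) = (exp (2 * π * I * k / n))⁻¹ * Pvec n k i := by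
  rw [eq_inv_mul_iff_mul_eq₀ (exp_ne_zero _), ← Pvec_apply_add_one, sub_add_cancel]

lemma exp_mul_I_add_inv_sub_two (x : ℂ) :
    exp (x * I) + (exp (x * I))⁻¹ - 2 = -4 * sin (x / 2) ^ 2 := by
  have hcos : cos x = cos (x / 2) ^ 2 - sin (x / 2) ^ 2 := by
    rw [← cos_two_mul', mul_div_cancel₀ _ two_ne_zero]
  rw [← exp_neg, ← neg_mul, ← two_cos, hcos]
  linear_combination 2 * cos_sq_add_sin_sq (x / 2)

lemma lapM_mulVec_Pvec (n k : ℕ) [NeZero n] :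
    lapM n *ᵥ Pvec n k = ((-4 * Real.sin (π * k / n) ^ 2 : ℝ) : ℂ) • Pvec n k := by
  funext i
  simp only [Matrix.mulVec, dotProduct, lapM, Matrix.of_apply, add_mul, ite_mul, one_mul,
    zero_mul, neg_mul, Finset.sum_add_distrib, Finset.sum_ite_eq', Finset.mem_univ, if_true,
    Pvec_apply_add_one, Pvec_apply_sub_one, Pi.smul_apply, smul_eq_mul]
  have hω := exp_mul_I_add_inv_sub_two (2 * π * k / n)
  rw [show 2 * π * k / n * I = 2 * π * I * k / n by ring,
    show (2 * π * k / n : ℂ) / 2 = π * k / n by ring] at hω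
  push_cast
  linear_combination Pvec n k i * hω

noncomputable def lapEigenvalue (n m k : ℕ) : ℝ :=
  -(4 : ℝ) ^ m * Real.sin (π * k / n) ^ (2 * m)

lemma Matrix.pow_mulVec_of_mulVec_eq_smul {ι R : Type*} [Fintype ι] [DecidableEq ι]
    [CommSemiring R] {A : Matrix ι ι R} {μ : R} {v : ι → R} (h : A *ᵥ v = μ • v) (m : ℕ) :
    (A ^ m) *ᵥ v = μ ^ m • v := by
  induction m with
  | zero => simp
  | succ m ih => rw [pow_succ', ← mulVec_mulVec, ih, mulVec_smul, h, smul_smul, pow_succ]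

lemma signed_lapM_pow_mulVec_Pvec (n m k : ℕ) [NeZero n] :
    ((-1 : ℂ) ^ (m + 1) • lapM n ^ m) *ᵥ Pvec n k = (lapEigenvalue n m k : ℂ) • Pvec n k := by
  rw [smul_mulVec, Matrix.pow_mulVec_of_mulVec_eq_smul (lapM_mulVec_Pvec n k), smul_smul,
    lapEigenvalue]
  congr 1
  have hsign : (-1 : ℂ) ^ (m + 1) * (-1) ^ m = -1 := by
    rw [← pow_add, show m + 1 + m = 2 * m + 1 by ring, pow_succ, pow_mul]
    norm_num
  push_cast
  rw [mul_pow, ← pow_mul, show (-4 : ℂ) ^ m = (-1) ^ m * 4 ^ m by rw [← mul_pow]; norm_num]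
  linear_combination (4 ^ m * sin (π * k / n) ^ (2 * m)) * hsign

lemma lapEigenvalue_zero (n : ℕ) {m : ℕ} (hm : m ≠ 0) : lapEigenvalue n m 0 = 0 := by
  simp [lapEigenvalue, hm]

lemma lapEigenvalue_neg {n k : ℕ} (m : ℕ) (hk : 0 < k) (hkn : k < n) :
    lapEigenvalue n m k < 0 := by
  have hk' : (0 : ℝ) < k := by exact_mod_cast hk
  have hn' : (0 : ℝ) < n := by exact_mod_cast hk.trans hkn
  have hsin : 0 < Real.sin (π * k / n) := by
    apply Real.sin_pos_of_pos_of_lt_pi (by positivity)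
    rw [div_lt_iff₀ hn', mul_lt_mul_iff_right₀ Real.pi_pos]
    exact_mod_cast hkn
  have : 0 < (4 : ℝ) ^ m * Real.sin (π * k / n) ^ (2 * m) := by positivity
  rw [lapEigenvalue]
  linarith

def IsDampedMode (β μ : ℝ) (f : ℝ → ℂ) : Prop :=
  ∃ A B r s : ℂ, r ^ 2 + β * r = μ ∧ s ^ 2 + β * s = μ ∧
    f = fun t : ℝ => A * exp (r * t) + B * exp (s * t)

lemma hasDerivAt_exp_mul_ofReal (r : ℂ) (t : ℝ) :
    HasDerivAt (fun t : ℝ => exp (r * t)) (r * exp (r * t)) t := by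
  simpa [mul_comm] using ((hasDerivAt_id (t : ℂ)).const_mul r).cexp.comp_ofReal

lemma IsDampedMode.exists_hasDerivAt {β μ : ℝ} {f : ℝ → ℂ} (hf : IsDampedMode β μ f) :
    ∃ f' f'' : ℝ → ℂ, ∀ t, HasDerivAt f (f' t) t ∧ HasDerivAt f' (f'' t) t ∧
      f'' t + β * f' t = μ * f t := by
  obtain ⟨A, B, r, s, hr, hs, rfl⟩ := hf
  refine ⟨fun t => A * (r * exp (r * t)) + B * (s * exp (s * t)),
    fun t => A * (r * (r * exp (r * t))) + B * (s * (s * exp (s * t))), fun t => ⟨?_, ?_, ?_⟩⟩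
  · exact ((hasDerivAt_exp_mul_ofReal r t).const_mul A).add
      ((hasDerivAt_exp_mul_ofReal s t).const_mul B)
  · exact (((hasDerivAt_exp_mul_ofReal r t).const_mul r).const_mul A).add
      (((hasDerivAt_exp_mul_ofReal s t).const_mul s).const_mul B)
  · linear_combination A * exp (r * t) * hr + B * exp (s * t) * hs

lemma re_neg_of_sq_add_mul_eq {β μ : ℝ} (hβ : 0 < β) (hμ : μ < 0) {r : ℂ}
    (hr : r ^ 2 + β * r = μ) : r.re < 0 := by
  -- If `0 ≤ r.re`, the imaginary part `(2 r.re + β) r.im = 0` forces `r` real, and then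
  -- `r² + β r ≥ 0`.
  have hre := congrArg re hr
  have him := congrArg im hr
  simp only [sq, add_re, add_im, mul_re, mul_im, ofReal_re, ofReal_im] at hre him
  by_contra! h
  have hy : r.im = 0 := by nlinarith
  rw [hy] at hre
  nlinarith

lemma tendsto_exp_mul_ofReal_atTop {r : ℂ} (hr : r.re < 0) :
    Tendsto (fun t : ℝ => exp (r * t)) atTop (𝓝 0) := by
  rw [tendsto_zero_iff_norm_tendsto_zero]
  simp only [norm_exp, re_mul_ofReal]
  exact Real.tendsto_exp_atBot.comp (tendsto_id.const_mul_atTop_of_neg hr)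

lemma IsDampedMode.tendsto_zero {β μ : ℝ} {f : ℝ → ℂ} (hf : IsDampedMode β μ f) (hβ : 0 < β)
    (hμ : μ < 0) : Tendsto f atTop (𝓝 0) := by
  obtain ⟨A, B, r, s, hr, hs, rfl⟩ := hf
  simpa using ((tendsto_exp_mul_ofReal_atTop (re_neg_of_sq_add_mul_eq hβ hμ hr)).const_mul A).add
    ((tendsto_exp_mul_ofReal_atTop (re_neg_of_sq_add_mul_eq hβ hμ hs)).const_mul B)

lemma isDampedMode_const (β : ℝ) (c : ℂ) : IsDampedMode β 0 (fun _ => c) :=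
  ⟨c, 0, 0, 0, by simp, by simp, by simp⟩

lemma isDampedMode_const_mul_exp {β μ : ℝ} (c : ℂ) {r : ℂ} (hr : r ^ 2 + β * r = μ) :
    IsDampedMode β μ (fun t => c * exp (r * t)) :=
  ⟨c, 0, r, r, hr, hr, by simp⟩

lemma isDampedMode_exp_mul_cos {β μ γ : ℝ} (c : ℂ) (hγ : γ ^ 2 = -μ - β ^ 2 / 4) :
    IsDampedMode β μ (fun t => exp (-(β : ℂ) * t / 2) * c * Real.cos (γ * t)) := by
  have hγ' : (γ : ℂ) ^ 2 = -μ - β ^ 2 / 4 := by exact_mod_cast hγ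
  refine ⟨c / 2, c / 2, -β / 2 + γ * I, -β / 2 - γ * I, ?_, ?_, funext fun t => ?_⟩
  · linear_combination (-1 : ℂ) * hγ' + (γ : ℂ) ^ 2 * I_sq
  · linear_combination (-1 : ℂ) * hγ' + (γ : ℂ) ^ 2 * I_sq
  · rw [ofReal_cos, cos,
      show (-β / 2 + γ * I) * t = -(β : ℂ) * t / 2 + (γ * t : ℝ) * I by push_cast; ring,
      show (-β / 2 - γ * I) * t = -(β : ℂ) * t / 2 + -(γ * t : ℝ) * I by push_cast; ring,
      exp_add, exp_add]
    ring

lemma isDampedMode_of_regimes {β μ γ ρ : ℝ} {c : ℂ} {f : ℝ → ℂ} (hμ : μ ≤ 0)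
    (hγ : γ = √(-μ - β ^ 2 / 4)) (hρ : ρ = -β / 2 + √(β ^ 2 / 4 + μ))
    (hosc : β ^ 2 / 4 < |μ| → ∀ t : ℝ, f t = exp (-(β : ℂ) * t / 2) * c * Real.cos (γ * t))
    (hcrit : μ = -β ^ 2 / 4 → ∀ t : ℝ, f t = c * exp (-(β : ℂ) * t / 2))
    (hover : |μ| < β ^ 2 / 4 → ∀ t : ℝ, f t = c * exp ((ρ : ℂ) * t)) :
    IsDampedMode β μ f ∧ f 0 = c := by
  rw [abs_of_nonpos hμ] at hosc hover
  rcases lt_trichotomy (-μ) (β ^ 2 / 4) with hlt | heq | hgt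
  · have hρ_root : ρ ^ 2 + β * ρ = μ := by
      rw [hρ]
      nlinarith [Real.sq_sqrt (by linarith : 0 ≤ β ^ 2 / 4 + μ)]
    rw [funext (hover hlt)]
    exact ⟨isDampedMode_const_mul_exp c (by exact_mod_cast hρ_root), by simp⟩
  · have hcrit' : f = fun t : ℝ => c * exp ((-β / 2 : ℂ) * t) := by
      funext t
      rw [hcrit (by linarith) t]
      ring_nf
    rw [hcrit']
    refine ⟨isDampedMode_const_mul_exp c ?_, by simp⟩
    have hμ_crit : (μ : ℂ) = -β ^ 2 / 4 := by exact_mod_cast (by linarith : μ = -β ^ 2 / 4)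
    rw [hμ_crit]
    ring
  · have hγ_sq : γ ^ 2 = -μ - β ^ 2 / 4 := by
      rw [hγ]
      exact Real.sq_sqrt (by linarith)
    rw [funext (hosc hgt)]
    exact ⟨isDampedMode_exp_mul_cos c hγ_sq, by simp⟩

lemma deriv_deriv_add_smul_deriv_sum_modes {ι κ : Type*} [Fintype ι] [Fintype κ] {β : ℝ}
    {μ : ι → ℝ} {a : ι → ℝ → ℂ} {v : ι → κ → ℂ} (L : Matrix κ κ ℂ)
    (hv : ∀ i, L *ᵥ v i = (μ i : ℂ) • v i) (ha : ∀ i, IsDampedMode β (μ i) (a i)) (t : ℝ) :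
    deriv (deriv fun t => ∑ i, a i t • v i) t + β • deriv (fun t => ∑ i, a i t • v i) t =
      L *ᵥ ∑ i, a i t • v i := by
  choose f' f'' hf using fun i => (ha i).exists_hasDerivAt
  have hX' : ∀ t, HasDerivAt (fun t => ∑ i, a i t • v i) (∑ i, f' i t • v i) t := fun t =>
    HasDerivAt.fun_sum fun i _ => (hf i t).1.smul_const (v i)
  have hX'' : HasDerivAt (deriv fun t => ∑ i, a i t • v i) (∑ i, f'' i t • v i) t := by
    rw [funext fun t => (hX' t).deriv]
    exact HasDerivAt.fun_sum fun i _ => (hf i t).2.1.smul_const (v i)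
  rw [hX''.deriv, (hX' t).deriv, mulVec_sum, Finset.smul_sum, ← Finset.sum_add_distrib]
  refine Finset.sum_congr rfl fun i _ => ?_
  rw [mulVec_smul, hv, smul_smul, ← smul_assoc, real_smul, ← add_smul, (hf i t).2.2, mul_comm]

theorem damped_general_solution_general (n m : ℕ) [NeZero n] (hm : 1 ≤ m)
    (β : ℝ) (hβ : 0 < β) (α0 : ℕ → ℂ)
    (lam γ rp : ℕ → ℝ)
    (hlam : ∀ k, lam k = -(4 : ℝ) ^ m * Real.sin (Real.pi * k / n) ^ (2 * m))
    (hγ : ∀ k, γ k = Real.sqrt (-lam k - β ^ 2 / 4))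
    (hrp : ∀ k, rp k = -β / 2 + Real.sqrt (β ^ 2 / 4 + lam k))
    (α : ℕ → ℝ → ℂ)
    (hα0 : ∀ t : ℝ, α 0 t = α0 0)
    (hαosc : ∀ k, 1 ≤ k → β ^ 2 / 4 < |lam k| →
      ∀ t : ℝ, α k t = Complex.exp (-(β : ℂ) * t / 2) * α0 k * Real.cos (γ k * t))
    (hαcrit : ∀ k, 1 ≤ k → lam k = -β ^ 2 / 4 →
      ∀ t : ℝ, α k t = α0 k * Complex.exp (-(β : ℂ) * t / 2))
    (hαover : ∀ k, 1 ≤ k → |lam k| < β ^ 2 / 4 →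
      ∀ t : ℝ, α k t = α0 k * Complex.exp ((rp k : ℂ) * t))
    (X : ℝ → Fin n → ℂ)
    (hX : ∀ t : ℝ, X t = ∑ k ∈ Finset.range n, α k t • Pvec n k) :
    (∀ t : ℝ, deriv (deriv X) t + β • deriv X t
        = ((-1 : ℂ) ^ (m + 1) • (lapM n) ^ m).mulVec (X t)) ∧
      X 0 = ∑ k ∈ Finset.range n, α0 k • Pvec n k ∧
      Filter.Tendsto X Filter.atTop (nhds (α0 0 • Pvec n 0)) := by
  obtain rfl : lam = lapEigenvalue n m := funext hlam
  have hmode : ∀ k < n, IsDampedMode β (lapEigenvalue n m k) (α k) ∧ α k 0 = α0 k := by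
    intro k hkn
    rcases Nat.eq_zero_or_pos k with rfl | hk
    · rw [lapEigenvalue_zero n (by omega), funext hα0]
      exact ⟨isDampedMode_const β (α0 0), rfl⟩
    · exact isDampedMode_of_regimes (lapEigenvalue_neg m hk hkn).le (hγ k) (hrp k)
        (hαosc k hk) (hαcrit k hk) (hαover k hk)
  have hlim : ∀ k ∈ Finset.range n, Tendsto (fun t => α k t • Pvec n k) atTop
      (𝓝 (if k = 0 then α0 0 • Pvec n 0 else 0)) := by
    intro k hk
    rw [Finset.mem_range] at hk
    split_ifs with h0
    · simp only [h0, hα0, tendsto_const_nhds]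
    · simpa using ((hmode k hk).1.tendsto_zero hβ
        (lapEigenvalue_neg m (Nat.pos_of_ne_zero h0) hk)).smul_const (Pvec n k)
  refine ⟨fun t => ?_, ?_, ?_⟩
  · rw [funext fun t => (hX t).trans (Finset.sum_range _)]
    exact deriv_deriv_add_smul_deriv_sum_modes (ι := Fin n) _
      (fun k => signed_lapM_pow_mulVec_Pvec n m k) (fun k => (hmode k k.2).1) t
  · rw [hX 0]
    exact Finset.sum_congr rfl fun k hk => by rw [(hmode k (Finset.mem_range.1 hk)).2]
  · rw [funext hX]
    simpa [NeZero.pos n] using tendsto_finsetSum _ hlim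

/-- The damped flow with zero free constants: the solution with modal coefficients
`α_0(t) = α⁰_0`, and for `k ≥ 1`, `α_k(t) = e^{-βt/2} α⁰_k cos(γ_{m,k} t)` in the
underdamped regime (with analogous formulas in the other regimes) solves
`X'' + βX' = (-1)^{m+1} M^m X` with `X(0) = X₀`, and `X(t) → α⁰_0 P_0`:
the polygon converges to a single point. -/
theorem damped_general_solution (n m : ℕ) [NeZero n] (hn : 3 ≤ n) (hm : 1 ≤ m)
    (β : ℝ) (hβ : 0 < β) (α0 : ℕ → ℂ)
    (lam γ rp : ℕ → ℝ)
    (hlam : ∀ k, lam k = -(4 : ℝ) ^ m * Real.sin (Real.pi * k / n) ^ (2 * m))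
    (hγ : ∀ k, γ k = Real.sqrt (-lam k - β ^ 2 / 4))
    (hrp : ∀ k, rp k = -β / 2 + Real.sqrt (β ^ 2 / 4 + lam k))
    (α : ℕ → ℝ → ℂ)
    (hα0 : ∀ t : ℝ, α 0 t = α0 0)
    (hαosc : ∀ k, 1 ≤ k → β ^ 2 / 4 < |lam k| →
      ∀ t : ℝ, α k t = Complex.exp (-(β : ℂ) * t / 2) * α0 k * Real.cos (γ k * t))
    (hαcrit : ∀ k, 1 ≤ k → lam k = -β ^ 2 / 4 →
      ∀ t : ℝ, α k t = α0 k * Complex.exp (-(β : ℂ) * t / 2))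
    (hαover : ∀ k, 1 ≤ k → |lam k| < β ^ 2 / 4 →
      ∀ t : ℝ, α k t = α0 k * Complex.exp ((rp k : ℂ) * t))
    (X : ℝ → Fin n → ℂ)
    (hX : ∀ t : ℝ, X t = ∑ k ∈ Finset.range n, α k t • Pvec n k) :
    (∀ t : ℝ, deriv (deriv X) t + β • deriv X t
        = ((-1 : ℂ) ^ (m + 1) • (lapM n) ^ m).mulVec (X t)) ∧
      X 0 = ∑ k ∈ Finset.range n, α0 k • Pvec n k ∧
      Filter.Tendsto X Filter.atTop (nhds (α0 0 • Pvec n 0)) :=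
  damped_general_solution_general n m hm β hβ α0 lam γ rp hlam hγ hrp α hα0 hαosc hαcrit hαover X hX
end
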